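/- arXiv:1108.4662 — 3 statements merged into one kernel-verified Lean document; each statement's English description precedes it below -/
import Mathlib

section
/- Let (γ_k)_{k=0}^∞ be a Legendre multiplier sequence. If there exist integers n > m ≥ 0 with γ_m ≠ 0 and γ_n = 0, then γ_k = 0 for all k ≥ n. -/
open Polynomial

/-- A real polynomial is *hyperbolic* if all of its complex roots are real
(the zero polynomial and nonzero constants are vacuously hyperbolic). -/
def Hyperbolic (p : Polynomial ℝ) : Prop :=
  ∀ z ∈ (p.map (algebraMap ℝ ℂ)).roots, z.im = 0

/-- `γ` is a multiplier sequence for the simple set `q`: the linear operator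
sending `q k` to `γ k • q k` maps hyperbolic polynomials to hyperbolic
polynomials.  (Since `q` is a simple set, every real polynomial has a unique
expansion `∑ a k • q k`, so this quantification over coefficient families
expresses exactly that property.) -/
def IsMultiplierSeqFor (q : ℕ → Polynomial ℝ) (γ : ℕ → ℝ) : Prop :=
  ∀ (n : ℕ) (a : ℕ → ℝ),
    Hyperbolic (∑ k ∈ Finset.range n, C (a k) * q k) →
    Hyperbolic (∑ k ∈ Finset.range n, C (γ k * a k) * q k)

/-- The Legendre polynomials, via Rodrigues' formula
`Le n = (1/(2^n n!)) Dⁿ[(x²-1)ⁿ]`. -/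
noncomputable def legendre (n : ℕ) : Polynomial ℝ :=
  C (1 / (2 ^ n * n.factorial : ℝ)) * derivative^[n] ((X ^ 2 - 1) ^ n)

/-- A Legendre multiplier sequence. -/
def IsLegendreMS (γ : ℕ → ℝ) : Prop := IsMultiplierSeqFor legendre γ

/-!
By induction it suffices to show `γ (n + 1) = 0`; suppose not. Since `Le n` has `n` simple real
zeros, for every `A` a large `B` makes `A Le m + B Le n + Le (n + 1)` change sign near each of
them, so this polynomial of degree `n + 1` is hyperbolic. The multiplier kills its middle term,
hence `γ m A Le m + γ (n + 1) Le (n + 1)` is hyperbolic for every `A`, and so is its `m`-th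
derivative `c + P`, where `c` is an arbitrary constant and `P = γ (n + 1) Dᵐ Le (n + 1)` has
degree `n + 1 - m ≥ 2`. This is impossible: the sum of the squares of the zeros of `P + c` is
given by its three top coefficients. For degree `≥ 3` it does not depend on `c` and bounds the
zeros, while their product `± (P(0) + c) / lc P` is unbounded; for degree `2` it is negative
for suitable `c`.
-/

theorem hyperbolic_iff_splits {p : ℝ[X]} : Hyperbolic p ↔ p.Splits := by
  refine ⟨fun hp => Splits.of_splits_map (algebraMap ℝ ℂ) (IsAlgClosed.splits _)
    fun z hz => ⟨z.re, Complex.ext rfl (hp z hz).symm⟩, fun hp z hz => ?_⟩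
  rw [hp.roots_map] at hz
  obtain ⟨x, -, rfl⟩ := Multiset.mem_map.1 hz
  exact Complex.ofReal_im x

theorem Hyperbolic.derivative {p : ℝ[X]} (hp : Hyperbolic p) :
    Hyperbolic (Polynomial.derivative p) := by
  rw [hyperbolic_iff_splits, splits_iff_card_roots] at hp ⊢
  have := p.card_roots_le_derivative
  have := (Polynomial.derivative p).card_roots'
  have := p.natDegree_derivative_le
  omega

theorem Hyperbolic.iterate_derivative {p : ℝ[X]} (hp : Hyperbolic p) (k : ℕ) :
    Hyperbolic (Polynomial.derivative^[k] p) := by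
  induction k with
  | zero => exact hp
  | succ k ih => rw [Function.iterate_succ_apply']; exact ih.derivative

theorem Polynomial.splits_of_natDegree_le_card_roots_add_one {p : ℝ[X]}
    (hp : p.natDegree ≤ Multiset.card p.roots + 1) : p.Splits := by
  obtain ⟨q, hq⟩ := p.prod_multiset_X_sub_C_dvd
  rcases eq_or_ne p 0 with rfl | hp0
  · exact Splits.zero
  have hq0 : q ≠ 0 := by rintro rfl; exact hp0 (by rw [hq, mul_zero])
  have hprod : (p.roots.map fun a => X - C a).prod.Monic :=
    monic_multiset_prod_of_monic _ _ fun a _ => monic_X_sub_C a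
  have hdeg := congrArg natDegree hq
  rw [hprod.natDegree_mul' hq0, natDegree_multiset_prod_X_sub_C_eq_card] at hdeg
  rw [hq]
  exact (Splits.multisetProd fun f hf => by
    obtain ⟨a, -, rfl⟩ := Multiset.mem_map.1 hf; exact Splits.X_sub_C a).mul
    (Splits.of_natDegree_le_one (by omega))

theorem hyperbolic_of_natDegree_le_card_add_one {p : ℝ[X]} {s : Finset ℝ}
    (hs : ∀ x ∈ s, p.IsRoot x) (hp : p.natDegree ≤ s.card + 1) : Hyperbolic p := by
  rcases eq_or_ne p 0 with rfl | hp0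
  · exact hyperbolic_iff_splits.2 Splits.zero
  have : s ⊆ p.roots.toFinset := fun x hx => by simpa [hp0] using hs x hx
  refine hyperbolic_iff_splits.2 (splits_of_natDegree_le_card_roots_add_one ?_)
  have := Finset.card_le_card this
  have := p.roots.toFinset_card_le
  omega

theorem Multiset.esymm_cons_succ {R : Type*} [CommSemiring R] (a : R) (s : Multiset R) (k : ℕ) :
    (a ::ₘ s).esymm (k + 1) = s.esymm (k + 1) + a * s.esymm k := by
  simp only [Multiset.esymm, Multiset.powersetCard_cons, Multiset.map_add, Multiset.sum_add,
    Multiset.map_map, Function.comp_def, Multiset.prod_cons, Multiset.sum_map_mul_left]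

theorem Multiset.sum_map_sq_eq_esymm {R : Type*} [CommRing R] (s : Multiset R) :
    (s.map (· ^ 2)).sum = s.esymm 1 ^ 2 - 2 * s.esymm 2 := by
  induction s using Multiset.induction with
  | empty => simp [Multiset.esymm, Multiset.powersetCard_zero_right]
  | cons a s ih =>
    rw [Multiset.map_cons, Multiset.sum_cons, ih, Multiset.esymm_cons_succ,
      Multiset.esymm_cons_succ, show s.esymm 0 = 1 by simp [Multiset.esymm]]
    ring

namespace Polynomial.Splits

theorem sum_map_sq_roots {p : ℝ[X]} (hp : p.Splits) (h2 : 2 ≤ p.natDegree) :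
    (p.roots.map (· ^ 2)).sum =
      (p.coeff (p.natDegree - 1) / p.leadingCoeff) ^ 2
        - 2 * (p.coeff (p.natDegree - 2) / p.leadingCoeff) := by
  have hlc : p.leadingCoeff ≠ 0 := by
    rw [Ne, leadingCoeff_eq_zero]; rintro rfl; simp at h2
  rw [coeff_eq_esymm_roots_of_splits hp (Nat.sub_le _ 1),
    coeff_eq_esymm_roots_of_splits hp (Nat.sub_le _ 2), Nat.sub_sub_self (by omega),
    Nat.sub_sub_self h2, Multiset.sum_map_sq_eq_esymm]
  field_simp

theorem sq_coeff_zero_le {p : ℝ[X]} (hp : p.Splits) :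
    p.coeff 0 ^ 2 ≤ p.leadingCoeff ^ 2 * (p.roots.map (· ^ 2)).sum ^ p.natDegree := by
  set S := (p.roots.map (· ^ 2)).sum
  have hsq : ∀ x ∈ p.roots, x ^ 2 ≤ S := fun x hx =>
    Multiset.single_le_sum (Multiset.forall_mem_map_iff.2 fun y _ => sq_nonneg y)
      _ (Multiset.mem_map_of_mem _ hx)
  have hprod : p.roots.prod ^ 2 ≤ S ^ Multiset.card p.roots := by
    calc p.roots.prod ^ 2 = (p.roots.map (· ^ 2)).prod := by
          simpa using (Multiset.prod_map_pow (m := p.roots) (f := id) (n := 2)).symm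
      _ ≤ (p.roots.map fun _ => S).prod :=
          Multiset.prod_map_le_prod_map₀ _ _ (fun x _ => sq_nonneg x) hsq
      _ = S ^ Multiset.card p.roots := by simp
  rw [hp.coeff_zero_eq_leadingCoeff_mul_prod_roots, hp.natDegree_eq_card_roots, mul_pow,
    mul_pow, ← pow_mul, pow_mul', neg_one_sq, one_pow, one_mul]
  exact mul_le_mul_of_nonneg_left hprod (sq_nonneg _)

end Polynomial.Splits

theorem exists_not_hyperbolic_add_C {P : ℝ[X]} (hP : 2 ≤ P.natDegree) :
    ∃ c, ¬ Hyperbolic (P + C c) := by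
  by_contra! H
  set d := P.natDegree
  set a := P.leadingCoeff
  have ha : a ≠ 0 := by rw [Ne, leadingCoeff_eq_zero]; rintro h; simp [d, h] at hP
  have hdeg c : (P + C c).natDegree = d := natDegree_add_C
  have hlc c : (P + C c).leadingCoeff = a := by
    rw [leadingCoeff, hdeg, coeff_add, coeff_C, if_neg (by omega), add_zero]
    rfl
  have hcoeff c {k} (hk : k ≠ 0) : (P + C c).coeff k = P.coeff k := by
    rw [coeff_add, coeff_C, if_neg hk, add_zero]
  have hsplit c := hyperbolic_iff_splits.1 (H c)
  have hsum c := (hsplit c).sum_map_sq_roots (by rw [hdeg]; exact hP)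
  have hnonneg c : 0 ≤ ((P + C c).roots.map (· ^ 2)).sum :=
    Multiset.sum_nonneg (Multiset.forall_mem_map_iff.2 fun y _ => sq_nonneg y)
  rcases hP.eq_or_lt with hd | hd
  · -- in degree two `c` enters the sum of squares through `coeff (d - 2) = coeff 0`
    have := hnonneg (a * ((P.coeff 1 / a) ^ 2 + 1) - P.coeff 0)
    rw [hsum, hdeg, hlc, ← hd, Nat.sub_self, Nat.add_one_sub_one, hcoeff _ one_ne_zero,
      coeff_add, coeff_C_zero, add_sub_cancel, mul_div_cancel_left₀ _ ha] at this
    linarith [sq_nonneg (P.coeff 1 / a)]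
  · set S := (P.coeff (d - 1) / a) ^ 2 - 2 * (P.coeff (d - 2) / a)
    have hS c : ((P + C c).roots.map (· ^ 2)).sum = S := by
      rw [hsum, hdeg, hlc, hcoeff _ (by omega), hcoeff _ (by omega)]
    have hS0 : 0 ≤ S := hS 0 ▸ hnonneg 0
    have := (hsplit (a * (S ^ d + 1) - P.coeff 0)).sq_coeff_zero_le
    rw [hS, hdeg, hlc, coeff_add, coeff_C_zero] at this
    have hSd : 0 ≤ S ^ d := pow_nonneg hS0 d
    have ha2 : 0 < a ^ 2 := by positivity
    nlinarith

open Filter Topology in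
theorem Finset.exists_pos_two_mul_lt_abs_sub (s : Finset ℝ) :
    ∃ δ > 0, ∀ x ∈ s, ∀ y ∈ s, x ≠ y → 2 * δ < |x - y| := by
  have : ∀ᶠ δ in 𝓝[>] (0 : ℝ), ∀ x ∈ s, ∀ y ∈ s, x ≠ y → 2 * δ < |x - y| := by
    refine (eventually_all_finset s).2 fun x _ => (eventually_all_finset s).2 fun y _ =>
      eventually_imp_distrib_left.2 fun hxy => ?_
    have : Tendsto (fun δ : ℝ => 2 * δ) (𝓝[>] 0) (𝓝 0) :=
      tendsto_nhdsWithin_of_tendsto_nhds ((continuous_const_mul 2).tendsto' 0 0 (mul_zero 2))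
    exact this.eventually (gt_mem_nhds (abs_pos.2 (sub_ne_zero.2 hxy)))
  obtain ⟨δ, hδ, hδ0⟩ := (this.and self_mem_nhdsWithin).exists
  exact ⟨δ, hδ0, hδ⟩

theorem add_mul_add_neg_of_abs_lt {a b u v : ℝ} (hab : a * b < 0) (hu : |u| < |a|)
    (hv : |v| < |b|) : (a + u) * (b + v) < 0 := by
  rcases mul_neg_iff.1 hab with ⟨ha, hb⟩ | ⟨ha, hb⟩
  · rw [abs_of_pos ha] at hu; rw [abs_of_neg hb] at hv
    have := abs_lt.1 hu; have := abs_lt.1 hv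
    nlinarith
  · rw [abs_of_neg ha] at hu; rw [abs_of_pos hb] at hv
    have := abs_lt.1 hu; have := abs_lt.1 hv
    nlinarith

theorem Polynomial.exists_isRoot_mem_Ioo_of_mul_neg {p : ℝ[X]} {a b : ℝ} (hab : a ≤ b)
    (h : p.eval a * p.eval b < 0) : ∃ c ∈ Set.Ioo a b, p.IsRoot c := by
  rcases mul_neg_iff.1 h with ⟨ha, hb⟩ | ⟨ha, hb⟩
  · exact intermediate_value_Ioo' hab p.continuousOn ⟨hb, ha⟩
  · exact intermediate_value_Ioo hab p.continuousOn ⟨ha, hb⟩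

theorem Polynomial.Splits.eval_sub_mul_eval_add_neg {h : ℝ[X]} (hs : h.Splits)
    (hnd : h.roots.Nodup) {x δ : ℝ} (hx : x ∈ h.roots) (hδ : 0 < δ)
    (hsep : ∀ y ∈ h.roots, y ≠ x → δ < |x - y|) :
    h.eval (x - δ) * h.eval (x + δ) < 0 := by
  have hh : h ≠ 0 := by rintro rfl; simp at hx
  have hlc : 0 < h.leadingCoeff ^ 2 := by have := leadingCoeff_ne_zero.2 hh; positivity
  -- the factor belonging to `x` is `-δ²`, every other one is `(x - y)² - δ² > 0`
  have hrest : 0 < ((h.roots.erase x).map fun y => (x - y) ^ 2 - δ ^ 2).prod := by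
    refine Multiset.prod_pos fun t ht => ?_
    obtain ⟨y, hy, rfl⟩ := Multiset.mem_map.1 ht
    obtain ⟨hyx, hy⟩ := (hnd.mem_erase_iff).1 hy
    have := hsep y hy hyx
    nlinarith [sq_abs (x - y), abs_nonneg (x - y)]
  have heval : h.eval (x - δ) * h.eval (x + δ) =
      h.leadingCoeff ^ 2 * (h.roots.map fun y => (x - δ - y) * (x + δ - y)).prod := by
    rw [hs.eval_eq_prod_roots, hs.eval_eq_prod_roots, Multiset.prod_map_mul]; ring
  rw [heval, ← Multiset.cons_erase hx, Multiset.map_cons, Multiset.prod_cons]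
  have : ((h.roots.erase x).map fun y => (x - δ - y) * (x + δ - y)) =
      (h.roots.erase x).map fun y => (x - y) ^ 2 - δ ^ 2 :=
    Multiset.map_congr rfl fun y _ => by ring
  rw [this, show (x - δ - x) * (x + δ - x) = -δ ^ 2 by ring, neg_mul, mul_neg, neg_lt_zero]
  exact mul_pos hlc (mul_pos (pow_pos hδ 2) hrest)

open Filter in
/-- `hh` says that `h` has only simple real zeros. For large `B`, `C B * h + r` changes sign
around each of them, so it keeps `natDegree h` real zeros. -/
theorem exists_hyperbolic_C_mul_add {h r : ℝ[X]} (hh : h.natDegree ≤ h.roots.toFinset.card)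
    (hr : r.natDegree ≤ h.natDegree + 1) : ∃ B, Hyperbolic (C B * h + r) := by
  set S := h.roots.toFinset
  have hcard : S.card = Multiset.card h.roots := le_antisymm h.roots.toFinset_card_le
    (h.card_roots'.trans hh)
  have hnd : h.roots.Nodup := Multiset.toFinset_card_eq_card_iff_nodup.1 hcard
  have hs : h.Splits := splits_iff_card_roots.2 (le_antisymm h.card_roots' (hcard ▸ hh))
  obtain ⟨δ, hδ, hsep⟩ := S.exists_pos_two_mul_lt_abs_sub
  have hsign : ∀ x ∈ S, h.eval (x - δ) * h.eval (x + δ) < 0 := fun x hx =>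
    hs.eval_sub_mul_eval_add_neg hnd (Multiset.mem_toFinset.1 hx) hδ fun y hy hyx => by
      linarith [hsep x hx y (Multiset.mem_toFinset.2 hy) hyx.symm]
  have hdom {t : ℝ} (ht : h.eval t ≠ 0) : ∀ᶠ B in atTop, |r.eval t| < |B * h.eval t| := by
    simp_rw [abs_mul]
    exact (tendsto_abs_atTop_atTop.atTop_mul_const (abs_pos.2 ht)).eventually_gt_atTop _
  obtain ⟨B, hB⟩ := ((eventually_all_finset S).2 fun x hx =>
    (hdom (left_ne_zero_of_mul (hsign x hx).ne)).and
      (hdom (right_ne_zero_of_mul (hsign x hx).ne))).exists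
  set p := C B * h + r
  have hroot : ∀ x ∈ S, ∃ z ∈ Set.Ioo (x - δ) (x + δ), p.IsRoot z := fun x hx => by
    have hB0 : B ≠ 0 := left_ne_zero_of_mul (abs_pos.1 ((abs_nonneg _).trans_lt (hB x hx).1))
    have hBh : B * h.eval (x - δ) * (B * h.eval (x + δ)) < 0 := by
      rw [mul_mul_mul_comm]; exact mul_neg_of_pos_of_neg (mul_self_pos.2 hB0) (hsign x hx)
    refine exists_isRoot_mem_Ioo_of_mul_neg (by linarith) ?_
    simpa [p, add_comm] using add_mul_add_neg_of_abs_lt hBh (hB x hx).1 (hB x hx).2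
  choose! z hz hzroot using hroot
  have hinj : Set.InjOn z S := fun x hx y hy hxy => by
    by_contra hne
    obtain ⟨hx₁, hx₂⟩ := hz x hx
    obtain ⟨hy₁, hy₂⟩ := hz y hy
    rw [hxy] at hx₁ hx₂
    rcases lt_abs.1 (hsep x hx y hy hne) with h | h <;> linarith
  refine ⟨B, hyperbolic_of_natDegree_le_card_add_one (s := S.image z) ?_ ?_⟩
  · simpa only [Finset.mem_image, forall_exists_index, and_imp, forall_apply_eq_imp_iff₂]
      using hzroot
  · rw [Finset.card_image_of_injOn hinj]
    refine (natDegree_add_le _ _).trans (max_le ?_ (by omega))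
    exact (natDegree_C_mul_le _ _).trans (by omega)

section IterateDerivative

variable {R : Type*} [CommRing R] [IsDomain R] [CharZero R]

theorem Polynomial.coeff_iterate_derivative_natDegree_sub_ne_zero {p : R[X]} (hp : p ≠ 0) {k : ℕ}
    (hk : k ≤ p.natDegree) : (derivative^[k] p).coeff (p.natDegree - k) ≠ 0 := by
  rw [coeff_iterate_derivative, Nat.sub_add_cancel hk, nsmul_eq_mul]
  refine mul_ne_zero (Nat.cast_ne_zero.2 fun h0 => ?_) (leadingCoeff_ne_zero.2 hp)
  rw [Nat.descFactorial_eq_zero_iff_lt] at h0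
  omega

theorem Polynomial.iterate_derivative_ne_zero {p : R[X]} (hp : p ≠ 0) {k : ℕ}
    (hk : k ≤ p.natDegree) : derivative^[k] p ≠ 0 := fun h0 =>
  coeff_iterate_derivative_natDegree_sub_ne_zero hp hk (by rw [h0, coeff_zero])

theorem Polynomial.natDegree_iterate_derivative_eq {p : R[X]} (hp : p ≠ 0) {k : ℕ}
    (hk : k ≤ p.natDegree) : (derivative^[k] p).natDegree = p.natDegree - k :=
  (natDegree_iterate_derivative p k).antisymm
    (le_natDegree_of_ne_zero (coeff_iterate_derivative_natDegree_sub_ne_zero hp hk))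

end IterateDerivative

section Legendre

theorem natDegree_X_sq_sub_one_pow (n : ℕ) : ((X ^ 2 - 1 : ℝ[X]) ^ n).natDegree = 2 * n := by
  rw [natDegree_pow, ← C_1, natDegree_X_pow_sub_C, mul_comm]

theorem X_sq_sub_one_pow_ne_zero (n : ℕ) : (X ^ 2 - 1 : ℝ[X]) ^ n ≠ 0 :=
  pow_ne_zero n (by simpa using X_pow_sub_C_ne_zero two_pos (1 : ℝ))

theorem isRoot_iterate_derivative_X_sq_sub_one_pow {n k : ℕ} (hk : k < n) {a : ℝ}
    (ha : a ^ 2 = 1) : (derivative^[k] ((X ^ 2 - 1 : ℝ[X]) ^ n)).IsRoot a := by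
  obtain ⟨q, hq⟩ := pow_sub_dvd_iterate_derivative_pow (X ^ 2 - 1 : ℝ[X]) n k
  rw [IsRoot, hq, eval_mul, eval_pow]
  simp [ha, Nat.sub_ne_zero_of_lt hk]

/-- Rolle's theorem, with `±1` staying zeros of `Dᵏ (X² - 1)ⁿ` for `k < n`. -/
theorem add_two_le_card_roots_iterate_derivative_X_sq_sub_one_pow {n k : ℕ} (hk : k < n) :
    k + 2 ≤ (derivative^[k] ((X ^ 2 - 1 : ℝ[X]) ^ n)).roots.toFinset.card := by
  set f := (X ^ 2 - 1 : ℝ[X]) ^ n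
  have hends {j : ℕ} (hj : j < n) : ({1, -1} : Finset ℝ) ⊆ (derivative^[j] f).roots.toFinset := by
    have hne := iterate_derivative_ne_zero (X_sq_sub_one_pow_ne_zero n)
      (by rw [natDegree_X_sq_sub_one_pow]; omega : j ≤ f.natDegree)
    intro a ha
    rw [Multiset.mem_toFinset, mem_roots hne]
    rw [Finset.mem_insert, Finset.mem_singleton] at ha
    exact isRoot_iterate_derivative_X_sq_sub_one_pow hj (by rcases ha with rfl | rfl <;> norm_num)
  have hpair : ({1, -1} : Finset ℝ).card = 2 := Finset.card_pair (by norm_num)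
  induction k with
  | zero => simpa [hpair] using Finset.card_le_card (hends hk)
  | succ k ih =>
    have h1 := hends hk
    have h2 := hends (k.lt_succ_self.trans hk)
    rw [Function.iterate_succ_apply'] at h1 ⊢
    set p := derivative^[k] f
    have := p.card_roots_toFinset_le_card_roots_derivative_sdiff_roots_succ
    have := Finset.card_sdiff_add_card_inter (derivative p).roots.toFinset p.roots.toFinset
    have := hpair ▸ Finset.card_le_card (Finset.subset_inter h1 h2)
    have := ih (by omega)
    omega

theorem roots_legendre (n : ℕ) :
    (legendre n).roots = (derivative^[n] ((X ^ 2 - 1 : ℝ[X]) ^ n)).roots :=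
  roots_C_mul _ (by positivity)

theorem le_card_roots_legendre (n : ℕ) : n ≤ (legendre n).roots.toFinset.card := by
  rw [roots_legendre]
  cases n with
  | zero => exact Nat.zero_le _
  | succ n =>
    have := add_two_le_card_roots_iterate_derivative_X_sq_sub_one_pow (Nat.lt_add_one n)
    have := (derivative^[n] ((X ^ 2 - 1 : ℝ[X]) ^ (n + 1))).card_roots_toFinset_le_derivative
    rw [← Function.iterate_succ_apply' derivative, Nat.succ_eq_add_one] at this
    omega

theorem natDegree_legendre (n : ℕ) : (legendre n).natDegree = n :=
  ((natDegree_C_mul_le _ _).trans ((natDegree_iterate_derivative _ _).trans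
      (by rw [natDegree_X_sq_sub_one_pow]; omega))).antisymm
    ((le_card_roots_legendre n).trans ((Multiset.toFinset_card_le _).trans (card_roots' _)))

theorem degree_legendre (n : ℕ) : (legendre n).degree = n := by
  refine (degree_eq_iff_natDegree_eq (mul_ne_zero (C_ne_zero.2 (by positivity)) ?_)).2
    (natDegree_legendre n)
  exact iterate_derivative_ne_zero (X_sq_sub_one_pow_ne_zero n)
    (by rw [natDegree_X_sq_sub_one_pow]; omega)

end Legendre

namespace IsMultiplierSeqFor

variable {q : ℕ → ℝ[X]} {γ : ℕ → ℝ}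

theorem hyperbolic_three (hγ : IsMultiplierSeqFor q γ) {i j k : ℕ} (hi : i ≤ k) (hj : j ≤ k)
    {a b c : ℝ} (h : Hyperbolic (C a * q i + C b * q j + C c * q k)) :
    Hyperbolic (C (γ i * a) * q i + C (γ j * b) * q j + C (γ k * c) * q k) := by
  have hsum (a b c : ℝ) : ∑ t ∈ Finset.range (k + 1),
      C ((Pi.single i a + Pi.single j b + Pi.single k c : ℕ → ℝ) t) * q t =
        C a * q i + C b * q j + C c * q k := by
    simp only [Pi.add_apply, map_add, add_mul, Finset.sum_add_distrib, Pi.single_apply,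
      apply_ite C, map_zero, ite_mul, zero_mul, Finset.sum_ite_eq', Finset.mem_range]
    simp [Nat.lt_succ_of_le hi, Nat.lt_succ_of_le hj]
  have hcoeff t : γ t * (Pi.single i a + Pi.single j b + Pi.single k c : ℕ → ℝ) t =
      (Pi.single i (γ i * a) + Pi.single j (γ j * b) + Pi.single k (γ k * c) : ℕ → ℝ) t := by
    simp only [Pi.add_apply, mul_add, Pi.single_apply, mul_ite, mul_zero]
    split_ifs <;> subst_vars <;> rfl
  have := hγ (k + 1) (Pi.single i a + Pi.single j b + Pi.single k c) (by rwa [hsum])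
  simp_rw [hcoeff, hsum] at this
  exact this

theorem eq_zero_succ_of_eq_zero (hγ : IsMultiplierSeqFor q γ) (hdeg : ∀ k, (q k).degree = k)
    (hroots : ∀ k, (q k).natDegree ≤ (q k).roots.toFinset.card) {m n : ℕ} (hmn : m < n)
    (hm : γ m ≠ 0) (hn : γ n = 0) : γ (n + 1) = 0 := by
  by_contra hne
  have hnat k : (q k).natDegree = k := natDegree_eq_of_degree_eq_some (hdeg k)
  have hq0 k : q k ≠ 0 := fun h0 => by simpa [h0] using hdeg k
  set P := C (γ (n + 1)) * derivative^[m] (q (n + 1))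
  have hP : 2 ≤ P.natDegree := by
    rw [natDegree_C_mul hne, natDegree_iterate_derivative_eq (hq0 _) (by rw [hnat]; omega), hnat]
    omega
  obtain ⟨c, hc⟩ := exists_not_hyperbolic_add_C hP
  set κ := (derivative^[m] (q m)).coeff 0
  have hκ : κ ≠ 0 := by
    simpa [hnat] using coeff_iterate_derivative_natDegree_sub_ne_zero (hq0 m) (hnat m).ge
  have hDm : derivative^[m] (q m) = C κ := eq_C_of_natDegree_le_zero (by
    rw [natDegree_iterate_derivative_eq (hq0 m) (hnat m).ge, hnat, Nat.sub_self])
  set A := c / (γ m * κ)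
  obtain ⟨B, hB⟩ := exists_hyperbolic_C_mul_add (h := q n) (r := C A * q m + q (n + 1)) (hroots n)
    (by
      rw [hnat]
      exact (natDegree_add_le _ _).trans
        (max_le ((natDegree_C_mul_le _ _).trans (by rw [hnat]; omega)) (hnat _).le))
  have hin : Hyperbolic (C A * q m + C B * q n + C 1 * q (n + 1)) := by
    convert hB using 1; rw [C_1, one_mul]; ring
  have hout := (hγ.hyperbolic_three (by omega) n.le_succ hin).iterate_derivative m
  rw [hn, zero_mul, C_0, zero_mul, add_zero, mul_one] at hout
  apply hc
  convert hout using 1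
  rw [iterate_map_add, iterate_derivative_C_mul, iterate_derivative_C_mul, hDm, ← C_mul,
    add_comm]
  congr 2
  simp only [A]
  field_simp

end IsMultiplierSeqFor

theorem stmt_1 (γ : ℕ → ℝ) (h : IsLegendreMS γ) (m n : ℕ) (hmn : m < n)
    (hm : γ m ≠ 0) (hn : γ n = 0) : ∀ k, n ≤ k → γ k = 0 := by
  intro k hk
  induction k, hk using Nat.le_induction with
  | base => exact hn
  | succ k hk ih =>
    exact IsMultiplierSeqFor.eq_zero_succ_of_eq_zero h degree_legendre
      (fun k => (natDegree_legendre k).trans_le (le_card_roots_legendre k)) (hmn.trans_le hk) hm ih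
end

section
/- Let β be a real number with 0 < β < 1. If f is a hyperbolic real polynomial, then the polynomial (x² − 1)·f''(x) + 2x·f'(x) + β·f(x) is hyperbolic; that is, the differential operator (x² − 1)D² + 2xD + β preserves the reality of zeros of real polynomials. -/
/-!
Fix `z` with `0 < Im z` (roots below the real axis are then excluded by conjugation) and write
`f = c ∏ (X - rᵢ)` with real `rᵢ`. Divided by `f(z)`, the value of `(z² - 1) f'' + 2z f' + β f`
at `z` is the symmetric multiaffine polynomial `(z² - 1) (e₁² - p₂) + 2z e₁ + β` in the points
`vᵢ = 1 / (z - rᵢ)`, which all lie in the closed disk `{t | Im z · |t|² + Im t ≤ 0}`. By the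
Grace–Walsh–Szegő coincidence theorem, obtained by merging the `vᵢ` one at a time with
Laguerre's theorem on polar derivatives, a zero would give a point `t` of the disk with
`(z² - 1) n (n - 1) t² + 2nz t + β = 0`. For `w = 1 / t` (so `Im z ≤ Im w`) and `ξ = β w + n z`
this reads `ξ² = (n² - βn(n - 1)) z² + βn(n - 1)`, and since `0 < β ≤ 1` such a square root has
imaginary part `< (n + β) Im z ≤ Im ξ`.
-/

open Polynomial

theorem Polynomial.eval_derivative_derivative_multiset_prod_X_sub_C {K : Type*} [Field K]
    (R : Multiset K) {x : K} (hx : ∀ r ∈ R, x ≠ r) :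
    ((R.map fun r ↦ X - C r).prod.derivative.derivative).eval x
      = (R.map fun r ↦ X - C r).prod.eval x *
        ((R.map fun r ↦ 1 / (x - r)).sum ^ 2 - (R.map fun r ↦ (1 / (x - r)) ^ 2).sum) := by
  induction R using Multiset.induction with
  | empty => simp
  | cons r R ih =>
    have hxr : x - r ≠ 0 := sub_ne_zero.2 (hx r (Multiset.mem_cons_self r R))
    have hR : ∀ r ∈ R, x ≠ r := fun u hu => hx u (Multiset.mem_cons_of_mem hu)
    set P := (R.map fun r ↦ X - C r).prod
    have hP : P.eval x ≠ 0 := by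
      simpa [P, eval_multiset_prod, Multiset.prod_eq_zero_iff, sub_eq_zero] using
        fun h => hR x h rfl
    have hsplit : P.Splits := Splits.multisetProd fun f hf => by
      obtain ⟨u, -, rfl⟩ := Multiset.mem_map.1 hf
      exact Splits.X_sub_C u
    have hP' : P.derivative.eval x = P.eval x * (R.map fun r ↦ 1 / (x - r)).sum := by
      simpa only [show P.roots = R from roots_multiset_prod_X_sub_C R] using
        hsplit.eval_derivative_eq_eval_mul_sum hP
    have hderiv : derivative (derivative ((X - C r) * P))
        = 2 * derivative P + (X - C r) * derivative (derivative P) := by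
      simp only [derivative_mul, derivative_add, derivative_sub, derivative_X, derivative_C,
        sub_zero, one_mul]
      ring
    rw [Multiset.map_cons, Multiset.prod_cons, hderiv]
    simp only [Multiset.map_cons, Multiset.sum_cons, eval_add, eval_mul, eval_sub, eval_X, eval_C,
      eval_ofNat, ih hR, hP']
    field_simp
    ring

theorem Polynomial.Splits.eval_derivative_derivative_eq_eval_mul {K : Type*} [Field K]
    {f : K[X]} (hf : f.Splits) {x : K} (hx : f.eval x ≠ 0) :
    f.derivative.derivative.eval x = f.eval x *
      ((f.roots.map fun r ↦ 1 / (x - r)).sum ^ 2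
        - (f.roots.map fun r ↦ (1 / (x - r)) ^ 2).sum) := by
  have hx' : ∀ r ∈ f.roots, x ≠ r := fun r hr h => hx (h ▸ isRoot_of_mem_roots hr)
  have hfac := hf.eq_prod_roots
  set R := f.roots
  rw [hfac, derivative_C_mul, derivative_C_mul, eval_C_mul, eval_C_mul,
    eval_derivative_derivative_multiset_prod_X_sub_C R hx', mul_assoc]

lemma hyperbolic_of_forall_im_pos {p : ℝ[X]}
    (h : ∀ z : ℂ, 0 < z.im → (p.map (algebraMap ℝ ℂ)).eval z ≠ 0) : Hyperbolic p := by
  intro z hz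
  have hroot : ∀ w ∈ (p.map (algebraMap ℝ ℂ)).roots, (p.map (algebraMap ℝ ℂ)).eval w = 0 :=
    fun w hw => (mem_roots'.1 hw).2
  rcases lt_trichotomy z.im 0 with hlt | heq | hgt
  · refine absurd ?_ (h (starRingEnd ℂ z) (by simpa using hlt))
    rw [eval_map_algebraMap, aeval_conj, ← eval_map_algebraMap, hroot z hz, map_zero]
  · exact heq
  · exact absurd (hroot z hz) (h z hgt)

section

open Complex

-- The image of the half-plane `δ ≤ Im w` under `w ↦ w⁻¹`, together with `0`.
def inversionDisk (δ : ℝ) : Set ℂ := {t | δ * normSq t + t.im ≤ 0}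

lemma inv_mem_inversionDisk {δ : ℝ} (hδ : 0 < δ) {w : ℂ} (hw : δ ≤ w.im) :
    w⁻¹ ∈ inversionDisk δ := by
  have hw0 : 0 < normSq w := normSq_pos.2 fun h => by simp [h] at hw; linarith
  simp only [inversionDisk, Set.mem_ofPred_eq, normSq_inv, inv_im]
  rw [← div_eq_mul_inv, ← add_div]
  exact div_nonpos_of_nonpos_of_nonneg (by linarith) hw0.le

lemma le_im_inv_of_mem_inversionDisk {δ : ℝ} {t : ℂ} (ht : t ∈ inversionDisk δ) (ht0 : t ≠ 0) :
    δ ≤ t⁻¹.im := by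
  rw [inv_im, le_div_iff₀ (normSq_pos.2 ht0)]
  linarith [show δ * normSq t + t.im ≤ 0 from ht]

lemma normSq_mul_add_im_sub_inv (δ : ℝ) (s : ℂ) {ζ : ℂ} (hζ : ζ ≠ 0) :
    normSq ζ * (δ * normSq (s - ζ⁻¹) + (s - ζ⁻¹).im)
      = (δ * normSq s + s.im) * normSq ζ + (-(2 * δ * s + I) * ζ).re + δ := by
  have hN : ζ.re ^ 2 + ζ.im ^ 2 ≠ 0 := by
    simpa [normSq_apply, sq] using (normSq_pos.2 hζ).ne'
  simp only [normSq_apply, sub_re, sub_im, inv_re, inv_im, mul_re, mul_im, neg_re, neg_im,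
    add_re, add_im, I_re, I_im, ofReal_re, ofReal_im, re_ofNat, im_ofNat]
  field_simp
  ring

lemma mul_normSq_le_of_add_eq {n : ℝ} (hn : 2 ≤ n) {m₀ m₁ m₂ : ℂ} (h : m₁ + m₂ = n * m₀) :
    n * normSq m₀ ≤ normSq m₁ + normSq m₂ := by
  have hsq : n ^ 2 * normSq m₀ = normSq (m₁ + m₂) := by
    rw [h, normSq_mul, normSq_ofReal, sq]
  have hpar : normSq (m₁ + m₂) ≤ 2 * (normSq m₁ + normSq m₂) := by
    simp only [normSq_apply, add_re, add_im]
    nlinarith [sq_nonneg (m₁.re - m₂.re), sq_nonneg (m₁.im - m₂.im)]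
  have : n * (n * normSq m₀) ≤ n * (normSq m₁ + normSq m₂) := by
    nlinarith [normSq_nonneg m₁, normSq_nonneg m₂]
  exact le_of_mul_le_mul_left this (by linarith)

-- Concavity of `m ↦ σ |m|² + Re (κ m) + δ`, plus its value `δ ≥ 0` at `0`.
lemma quadratic_form_add_le_mul_of_add_eq {σ δ n : ℝ} (hσ : σ ≤ 0) (hδ : 0 ≤ δ) (hn : 2 ≤ n)
    (κ : ℂ) {m₀ m₁ m₂ : ℂ} (h : m₁ + m₂ = n * m₀) :
    (σ * normSq m₁ + (κ * m₁).re + δ) + (σ * normSq m₂ + (κ * m₂).re + δ)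
      ≤ n * (σ * normSq m₀ + (κ * m₀).re + δ) := by
  have hlin : (κ * m₁).re + (κ * m₂).re = n * (κ * m₀).re := by
    rw [← add_re, ← mul_add, h, mul_left_comm, re_ofReal_mul]
  nlinarith [mul_le_mul_of_nonpos_left (mul_normSq_le_of_add_eq hn h) hσ]

lemma laguerre_polar_ne_zero {δ n : ℝ} (hδ : 0 ≤ δ) (hn : 2 ≤ n) {s w t₁ t₂ : ℂ}
    (hs : s ∈ inversionDisk δ) (hw : w ∈ inversionDisk δ)
    (ht₁ : t₁ ∉ inversionDisk δ) (ht₂ : t₂ ∉ inversionDisk δ) :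
    n * ((s - t₁) * (s - t₂)) + (w - s) * ((s - t₁) + (s - t₂)) ≠ 0 := by
  intro h
  have hst₁ : s - t₁ ≠ 0 := sub_ne_zero.2 fun e => ht₁ (e ▸ hs)
  have hst₂ : s - t₂ ≠ 0 := sub_ne_zero.2 fun e => ht₂ (e ▸ hs)
  have hsw : s - w ≠ 0 := by
    intro e
    have : (n : ℂ) * ((s - t₁) * (s - t₂)) = 0 := by
      linear_combination h + ((s - t₁) + (s - t₂)) * e
    simp [hst₁, hst₂, show (n : ℂ) ≠ 0 by exact_mod_cast (by linarith : n ≠ 0)] at this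
  have hsum : (s - t₁)⁻¹ + (s - t₂)⁻¹ = n * (s - w)⁻¹ := by
    field_simp
    linear_combination -h
  -- With `G m = |m|² (δ |s - m⁻¹|² + Im (s - m⁻¹))`, the roots give `G mᵢ > 0` and `w` gives
  -- `G m₀ ≤ 0`, where `mᵢ = (s - tᵢ)⁻¹`, `m₀ = (s - w)⁻¹ = (m₁ + m₂) / n`.
  set σ := δ * normSq s + s.im
  have hG : ∀ u, s - u ≠ 0 → normSq (s - u)⁻¹ * (δ * normSq u + u.im)
      = σ * normSq (s - u)⁻¹ + (-(2 * δ * s + I) * (s - u)⁻¹).re + δ := fun u hu => by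
    simpa using normSq_mul_add_im_sub_inv δ s (inv_ne_zero hu)
  have h₁ := hG t₁ hst₁ ▸ mul_pos (normSq_pos.2 (inv_ne_zero hst₁)) (not_le.1 ht₁)
  have h₂ := hG t₂ hst₂ ▸ mul_pos (normSq_pos.2 (inv_ne_zero hst₂)) (not_le.1 ht₂)
  have h₀ := hG w hsw ▸ mul_nonpos_of_nonneg_of_nonpos (normSq_nonneg _) hw
  have := quadratic_form_add_le_mul_of_add_eq hs hδ hn (-(2 * δ * s + I)) hsum
  nlinarith

lemma exists_quadratic_vieta {a : ℂ} (ha : a ≠ 0) (b c : ℂ) :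
    ∃ t₁ t₂ : ℂ, b = -a * (t₁ + t₂) ∧ c = a * t₁ * t₂ := by
  obtain ⟨d, hd⟩ := IsAlgClosed.exists_eq_mul_self (discrim a b c)
  obtain ⟨t₁, ht₁⟩ := exists_quadratic_eq_zero ha ⟨d, hd⟩
  have hb : a * (b / a) = b := mul_div_cancel₀ b ha
  exact ⟨t₁, -b / a - t₁, by linear_combination -hb, by linear_combination ht₁ + t₁ * hb⟩

lemma exists_mem_inversionDisk_quadratic_eq_zero_of_polar {δ n : ℝ} (hδ : 0 ≤ δ) (hn : 2 ≤ n)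
    {a b c s w : ℂ} (ha : a ≠ 0) (hs : s ∈ inversionDisk δ) (hw : w ∈ inversionDisk δ)
    (h : n * (a * s ^ 2 + b * s + c) + (w - s) * (2 * a * s + b) = 0) :
    ∃ t ∈ inversionDisk δ, a * t ^ 2 + b * t + c = 0 := by
  obtain ⟨t₁, t₂, rfl, rfl⟩ := exists_quadratic_vieta ha b c
  by_contra! hroots
  have hnot : ∀ {t}, a * t ^ 2 + -a * (t₁ + t₂) * t + a * t₁ * t₂ = 0 → t ∉ inversionDisk δ :=
    fun ht hmem => hroots _ hmem ht
  refine laguerre_polar_ne_zero hδ hn hs hw (hnot (t := t₁) (by ring))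
    (hnot (t := t₂) (by ring)) ((mul_eq_zero.1 ?_).resolve_left ha)
  linear_combination h

lemma exists_mem_inversionDisk_quadratic_eq_zero {δ : ℝ} (hδ : 0 ≤ δ) {A : ℂ} (hA : A ≠ 0)
    (V : Multiset ℂ) (hV : ∀ v ∈ V, v ∈ inversionDisk δ) (B C : ℂ)
    (h : A * (V.sum ^ 2 - (V.map (· ^ 2)).sum) + B * V.sum + C = 0) :
    ∃ t ∈ inversionDisk δ,
      A * ((V.card : ℂ) ^ 2 - V.card) * t ^ 2 + B * V.card * t + C = 0 := by
  induction V using Multiset.induction generalizing B C with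
  | empty => exact ⟨0, by simp [inversionDisk], by simpa using h⟩
  | cons v V ih =>
    have hv := hV v (Multiset.mem_cons_self v V)
    obtain ⟨s, hs, hs0⟩ := ih (fun u hu => hV u (Multiset.mem_cons_of_mem hu))
      (B + 2 * A * v) (C + B * v) (by
        simp only [Multiset.sum_cons, Multiset.map_cons] at h
        linear_combination h)
    simp only [Multiset.card_cons, Nat.cast_add, Nat.cast_one]
    rcases Nat.eq_zero_or_pos V.card with hm | hm
    · refine ⟨v, hv, ?_⟩
      simp only [hm, CharP.cast_eq_zero] at hs0 ⊢
      linear_combination hs0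
    · have hm1 : (1 : ℝ) ≤ V.card := by exact_mod_cast hm
      refine exists_mem_inversionDisk_quadratic_eq_zero_of_polar hδ (n := V.card + 1)
        (by linarith) ?_ hs hv ?_
      · have hcard : ((V.card : ℂ) + 1) ^ 2 - (V.card + 1) = (V.card + 1) * V.card := by ring
        rw [hcard]
        exact mul_ne_zero hA
          (mul_ne_zero (Nat.cast_add_one_ne_zero _) (by exact_mod_cast hm.ne'))
      · push_cast
        linear_combination ((V.card : ℂ) + 1) * hs0

lemma im_lt_of_sq_eq {ξ z : ℂ} {c d κ : ℝ} (hc : 0 ≤ c) (hd : 0 ≤ d) (hκ : 0 < κ)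
    (hcκ : c < κ ^ 2) (hz : 0 < z.im) (h : ξ ^ 2 = c * z ^ 2 + d) : ξ.im < κ * z.im := by
  have hre : ξ.re ^ 2 - ξ.im ^ 2 = c * (z.re ^ 2 - z.im ^ 2) + d := by
    simpa [sq] using congrArg re h
  have him : ξ.re * ξ.im = c * z.re * z.im := by
    have := congrArg im h
    simp only [sq, mul_im, add_im, ofReal_re, ofReal_im, mul_re] at this
    linear_combination this / 2
  by_contra! hle
  set k := κ * z.im
  have hk : 0 < k := mul_pos hκ hz
  have hy : k ^ 2 ≤ ξ.im ^ 2 := pow_le_pow_left₀ hk.le hle 2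
  have hfactor : k ^ 4 + k ^ 2 * (c * (z.re ^ 2 - z.im ^ 2) + d) - (c * z.re * z.im) ^ 2
      = (k ^ 2 - ξ.im ^ 2) * (k ^ 2 + ξ.re ^ 2) := by
    rw [← hre, ← him]; ring
  have hpos : 0 < k ^ 4 + k ^ 2 * (c * (z.re ^ 2 - z.im ^ 2) + d) - (c * z.re * z.im) ^ 2 := by
    have hexpand : k ^ 4 + k ^ 2 * (c * (z.re ^ 2 - z.im ^ 2) + d) - (c * z.re * z.im) ^ 2
        = z.im ^ 2 * ((κ ^ 2 * z.im ^ 2 + c * z.re ^ 2) * (κ ^ 2 - c) + κ ^ 2 * d) := by ring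
    rw [hexpand]
    have := sub_pos.2 hcκ
    positivity
  nlinarith [mul_nonneg (sub_nonneg.2 hy) (add_nonneg (sq_nonneg k) (sq_nonneg ξ.re))]

lemma quadratic_ne_zero_of_mem_inversionDisk {β : ℝ} (h0 : 0 < β) (h1 : β ≤ 1) (n : ℕ)
    {z t : ℂ} (hz : 0 < z.im) (ht : t ∈ inversionDisk z.im) :
    (z ^ 2 - 1) * ((n : ℂ) ^ 2 - n) * t ^ 2 + 2 * z * n * t + β ≠ 0 := by
  intro h
  have ht0 : t ≠ 0 := by
    rintro rfl
    simp [h0.ne'] at h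
  set w := t⁻¹
  have hw : z.im ≤ w.im := le_im_inv_of_mem_inversionDisk ht ht0
  have htw : t * w = 1 := mul_inv_cancel₀ ht0
  have hξ : ((β : ℂ) * w + n * z) ^ 2
      = ((n ^ 2 - β * n * (n - 1) : ℝ) : ℂ) * z ^ 2 + ((β * n * (n - 1) : ℝ) : ℂ) := by
    push_cast
    linear_combination (β : ℂ) * w ^ 2 * h
      - β * ((z ^ 2 - 1) * ((n : ℂ) ^ 2 - n) * (t * w + 1) + 2 * z * n * w) * htw
  have hnn : 0 ≤ (n : ℝ) * (n - 1) := by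
    rcases n.eq_zero_or_pos with rfl | hn
    · simp
    · have : (1 : ℝ) ≤ n := by exact_mod_cast hn
      nlinarith
  have hn0 : (0 : ℝ) ≤ n := n.cast_nonneg
  have hlt := im_lt_of_sq_eq (κ := n + β) (by nlinarith) (by rw [mul_assoc]; positivity)
    (by positivity) (by nlinarith) hz hξ
  simp only [add_im, mul_im, ofReal_re, ofReal_im, natCast_re, natCast_im] at hlt
  nlinarith

lemma eval_map_operator_ne_zero_of_im_pos {β : ℝ} (h0 : 0 < β) (h1 : β ≤ 1) {f : ℝ[X]}
    (hf : Hyperbolic f) (hf0 : f ≠ 0) {z : ℂ} (hz : 0 < z.im) :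
    (((X ^ 2 - 1) * derivative (derivative f) + 2 * X * derivative f + C β * f).map
      (algebraMap ℝ ℂ)).eval z ≠ 0 := by
  set F := f.map (algebraMap ℝ ℂ)
  have hFs : F.Splits := IsAlgClosed.splits F
  have hFz : F.eval z ≠ 0 := fun h => hz.ne' (hf z (mem_roots'.2 ⟨map_ne_zero hf0, h⟩))
  set V := F.roots.map fun r ↦ 1 / (z - r)
  have hV : ∀ v ∈ V, v ∈ inversionDisk z.im := by
    rintro _ hv
    obtain ⟨r, hr, rfl⟩ := Multiset.mem_map.1 hv
    rw [one_div]
    exact inv_mem_inversionDisk hz (by simp [hf r hr])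
  have hA : z ^ 2 - 1 ≠ 0 := by
    rw [sub_ne_zero, Ne, sq_eq_one_iff]
    rintro (rfl | rfl) <;> simp at hz
  have heval : (((X ^ 2 - 1) * derivative (derivative f) + 2 * X * derivative f + C β * f).map
      (algebraMap ℝ ℂ)).eval z
      = F.eval z * ((z ^ 2 - 1) * (V.sum ^ 2 - (V.map (· ^ 2)).sum) + 2 * z * V.sum + β) := by
    have hmap : ((X ^ 2 - 1) * derivative (derivative f) + 2 * X * derivative f + C β * f).map
        (algebraMap ℝ ℂ) = (X ^ 2 - 1) * F.derivative.derivative + 2 * X * F.derivative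
          + C (β : ℂ) * F := by
      simp [F, derivative_map]
    rw [hmap]
    simp only [eval_add, eval_mul, eval_sub, eval_pow, eval_X, eval_one, eval_C, eval_ofNat,
      hFs.eval_derivative_derivative_eq_eval_mul hFz, hFs.eval_derivative_eq_eval_mul_sum hFz,
      V, Multiset.map_map, Function.comp_def]
    ring
  rw [heval]
  refine mul_ne_zero hFz fun h => ?_
  obtain ⟨t, ht, hroot⟩ :=
    exists_mem_inversionDisk_quadratic_eq_zero hz.le hA V hV (2 * z) β (by linear_combination h)
  exact quadratic_ne_zero_of_mem_inversionDisk h0 h1 _ hz ht (by linear_combination hroot)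

end

theorem stmt_17 (β : ℝ) (h0 : 0 < β) (h1 : β < 1) (f : Polynomial ℝ)
    (hf : Hyperbolic f) :
    Hyperbolic ((X ^ 2 - 1) * derivative (derivative f) + 2 * X * derivative f
      + C β * f) := by
  rcases eq_or_ne f 0 with rfl | hf0
  · simp [Hyperbolic]
  exact hyperbolic_of_forall_im_pos fun z hz =>
    eval_map_operator_ne_zero_of_im_pos h0 h1.le hf hf0 hz
end

section
/- Let r be a nonzero real number. The geometric sequence (r^k)_{k=0}^∞ is a Legendre multiplier sequence if and only if |r| = 1. -/
open Polynomial

/-!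
For `r = ±1` the operator is `p(x) ↦ p(±x)`, since `Le_k(-x) = (-1)^k Le_k(x)`. For other `r`,
look at polynomials of degree at most three, where the operator is explicit:
`p(x) ↦ p(r x) + (1 - r²)(p₂/3 + (3/5) p₃ r x)`, with `p₂, p₃` the coefficients of `x², x³`.
If `0 < |r| < 1` it sends `3x²` to `3r²x² + 1 - r²`, and if `|r| > 1`, with `t = √(r² - 1)`, it
sends `(x - t)³` to `r x ((r x - 3t/2)² + 3t²/20)`; both images have non-real roots.
-/

open Finset

lemma legendre_zero : legendre 0 = 1 := by
  simp [legendre]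

lemma legendre_one : legendre 1 = X := by
  rw [legendre, Function.iterate_one, pow_one, pow_one, derivative_sub, derivative_X_pow,
    derivative_one, sub_zero, ← mul_assoc, ← C_mul]
  norm_num

lemma legendre_two : legendre 2 = C (3 / 2) * X ^ 2 - C (1 / 2) := by
  rw [legendre, show ((X : ℝ[X]) ^ 2 - 1) ^ 2 = X ^ 4 - C 2 * X ^ 2 + 1 by rw [C_ofNat]; ring]
  simp only [iterate_map_add, iterate_map_sub, iterate_derivative_X_pow_eq_C_mul,
    iterate_derivative_C_mul, iterate_derivative_one two_pos]
  simp only [mul_sub, mul_add, ← mul_assoc, ← C_mul]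
  norm_num [Nat.descFactorial, Nat.factorial]

lemma legendre_three : legendre 3 = C (5 / 2) * X ^ 3 - C (3 / 2) * X := by
  rw [legendre, show ((X : ℝ[X]) ^ 2 - 1) ^ 3 = X ^ 6 - C 3 * X ^ 4 + C 3 * X ^ 2 - 1 by
    rw [C_ofNat]; ring]
  simp only [iterate_map_add, iterate_map_sub, iterate_derivative_X_pow_eq_C_mul,
    iterate_derivative_C_mul, iterate_derivative_one three_pos]
  simp only [mul_sub, mul_add, ← mul_assoc, ← C_mul]
  norm_num [Nat.descFactorial, Nat.factorial]

lemma iterate_derivative_comp_neg_X (p : ℝ[X]) (k : ℕ) :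
    (derivative^[k] p).comp (-X) = (-1) ^ k * derivative^[k] (p.comp (-X)) := by
  induction k generalizing p with
  | zero => simp
  | succ k ih =>
    have h : (derivative p).comp (-X) = -derivative (p.comp (-X)) := by simp [derivative_comp]
    simp [ih (derivative p), h, pow_succ]

lemma legendre_comp_neg_X (n : ℕ) : (legendre n).comp (-X) = (-1) ^ n * legendre n := by
  have h_even : (((X : ℝ[X]) ^ 2 - 1) ^ n).comp (-X) = (X ^ 2 - 1) ^ n := by simp
  rw [legendre, mul_comp, C_comp, iterate_derivative_comp_neg_X, h_even]
  ring

lemma Hyperbolic.comp_neg_X {p : ℝ[X]} (hp : Hyperbolic p) : Hyperbolic (p.comp (-X)) := by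
  intro z hz
  simp only [Polynomial.map_comp, Polynomial.map_neg, map_X, roots_comp_neg_X,
    Multiset.mem_map] at hz
  obtain ⟨w, hw, rfl⟩ := hz
  simpa using hp w hw

lemma isLegendreMS_neg_one_pow : IsLegendreMS (fun k => (-1 : ℝ) ^ k) := by
  intro n a hp
  convert hp.comp_neg_X using 1
  rw [Polynomial.sum_comp]
  refine sum_congr rfl fun k _ => ?_
  rw [mul_comp, C_comp, legendre_comp_neg_X, C_mul, map_pow, map_neg, map_one]
  ring

lemma hyperbolic_C_mul_X_sub_C_pow (a b : ℝ) (n : ℕ) : Hyperbolic (C a * (X - C b) ^ n) := by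
  rcases eq_or_ne a 0 with rfl | ha
  · simp [Hyperbolic]
  · simp [Hyperbolic, Polynomial.map_pow, roots_C_mul, ha, roots_pow]

lemma not_hyperbolic_mul_sq_add {f : ℝ[X]} (hf : f ≠ 0) (a : ℝ) {c : ℝ} (hc : 0 < c) :
    ¬ Hyperbolic (f * ((X - C a) ^ 2 + C c)) := by
  have hq : (X - C a) ^ 2 + C c ≠ 0 := fun h => by
    simpa [hc.ne'] using congrArg (eval a) h
  intro hyp
  have hroot : (a + Real.sqrt c * Complex.I : ℂ) ∈
      ((f * ((X - C a) ^ 2 + C c)).map (algebraMap ℝ ℂ)).roots := by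
    rw [mem_roots (Polynomial.map_ne_zero (mul_ne_zero hf hq))]
    simp [mul_pow, ← Complex.ofReal_pow, Real.sq_sqrt hc.le]
  have h_im := hyp _ hroot
  simp [(Real.sqrt_pos.mpr hc).ne'] at h_im

lemma eval_sum_range_four_legendre (b : ℕ → ℝ) (x : ℝ) :
    (∑ k ∈ range 4, C (b k) * legendre k).eval x
      = b 0 + b 1 * x + b 2 * (3 * x ^ 2 - 1) / 2 + b 3 * (5 * x ^ 3 - 3 * x) / 2 := by
  simp only [sum_range_succ, sum_range_zero, zero_add, legendre_zero, legendre_one, legendre_two,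
    legendre_three, eval_add, eval_sub, eval_mul, eval_pow, eval_C, eval_X, eval_one]
  ring

theorem IsLegendreMS.hyperbolic_cubic {r : ℝ} (h : IsLegendreMS (fun k => r ^ k))
    {c₀ c₁ c₂ c₃ : ℝ} (hp : Hyperbolic (C c₃ * X ^ 3 + C c₂ * X ^ 2 + C c₁ * X + C c₀)) :
    Hyperbolic (C (c₃ * r ^ 3) * X ^ 3 + C (c₂ * r ^ 2) * X ^ 2
      + C ((c₁ + 3 / 5 * (1 - r ^ 2) * c₃) * r) * X + C (c₀ + (1 - r ^ 2) * c₂ / 3)) := by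
  let a : ℕ → ℝ := fun
    | 0 => c₀ + c₂ / 3
    | 1 => c₁ + 3 / 5 * c₃
    | 2 => 2 / 3 * c₂
    | 3 => 2 / 5 * c₃
    | _ => 0
  have h_expand : C c₃ * X ^ 3 + C c₂ * X ^ 2 + C c₁ * X + C c₀
      = ∑ k ∈ range 4, C (a k) * legendre k := by
    apply Polynomial.funext; intro x
    rw [eval_sum_range_four_legendre]
    simp only [eval_add, eval_mul, eval_pow, eval_C, eval_X, a]
    ring
  have h_image : C (c₃ * r ^ 3) * X ^ 3 + C (c₂ * r ^ 2) * X ^ 2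
      + C ((c₁ + 3 / 5 * (1 - r ^ 2) * c₃) * r) * X + C (c₀ + (1 - r ^ 2) * c₂ / 3)
      = ∑ k ∈ range 4, C (r ^ k * a k) * legendre k := by
    apply Polynomial.funext; intro x
    rw [eval_sum_range_four_legendre]
    simp only [eval_add, eval_mul, eval_pow, eval_C, eval_X, a]
    ring
  rw [h_image]
  exact h 4 a (h_expand ▸ hp)

lemma not_isLegendreMS_pow_of_abs_lt_one {r : ℝ} (hr : r ≠ 0) (hlt : |r| < 1) :
    ¬ IsLegendreMS (fun k => r ^ k) := by
  intro h
  have hyp := h.hyperbolic_cubic (c₀ := 0) (c₁ := 0) (c₂ := 3) (c₃ := 0)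
    (by simpa using hyperbolic_C_mul_X_sub_C_pow 3 0 2)
  have h_image : C (0 * r ^ 3) * X ^ 3 + C (3 * r ^ 2) * X ^ 2
      + C ((0 + 3 / 5 * (1 - r ^ 2) * 0) * r) * X + C (0 + (1 - r ^ 2) * 3 / 3)
      = C (3 * r ^ 2) * ((X - C 0) ^ 2 + C ((1 - r ^ 2) / (3 * r ^ 2))) := by
    apply Polynomial.funext; intro x
    simp only [eval_add, eval_sub, eval_mul, eval_pow, eval_C, eval_X]
    field_simp
    ring
  rw [h_image] at hyp
  refine not_hyperbolic_mul_sq_add (by simpa using hr) 0 ?_ hyp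
  have : r ^ 2 < 1 := by nlinarith [sq_abs r, abs_nonneg r]
  positivity

lemma not_isLegendreMS_pow_of_one_lt_abs {r : ℝ} (hgt : 1 < |r|) :
    ¬ IsLegendreMS (fun k => r ^ k) := by
  intro h
  have hr : r ≠ 0 := by rintro rfl; norm_num at hgt
  set t := Real.sqrt (r ^ 2 - 1)
  have ht : 0 < t := Real.sqrt_pos.mpr (by nlinarith [sq_abs r, abs_nonneg r])
  have ht2 : t ^ 2 = r ^ 2 - 1 := Real.sq_sqrt (by nlinarith [sq_abs r, abs_nonneg r])
  have hyp := h.hyperbolic_cubic (c₀ := -t ^ 3) (c₁ := 3 * t ^ 2) (c₂ := -3 * t) (c₃ := 1) (by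
    convert hyperbolic_C_mul_X_sub_C_pow 1 t 3 using 1
    apply Polynomial.funext; intro x
    simp only [eval_add, eval_sub, eval_mul, eval_pow, eval_C, eval_X]
    ring)
  have h_image : C (1 * r ^ 3) * X ^ 3 + C (-3 * t * r ^ 2) * X ^ 2
      + C ((3 * t ^ 2 + 3 / 5 * (1 - r ^ 2) * 1) * r) * X + C (-t ^ 3 + (1 - r ^ 2) * (-3 * t) / 3)
      = C (r ^ 3) * X * ((X - C (3 * t / (2 * r))) ^ 2 + C (3 * t ^ 2 / (20 * r ^ 2))) := by
    rw [show 1 - r ^ 2 = -t ^ 2 by linarith]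
    apply Polynomial.funext; intro x
    simp only [eval_add, eval_sub, eval_mul, eval_pow, eval_C, eval_X]
    field_simp
    ring
  rw [h_image] at hyp
  exact not_hyperbolic_mul_sq_add (by simp [hr]) _ (by positivity) hyp

theorem stmt_19 (r : ℝ) (hr : r ≠ 0) :
    IsLegendreMS (fun k => r ^ k) ↔ |r| = 1 := by
  constructor
  · intro h
    by_contra hne
    rcases lt_or_gt_of_ne hne with hlt | hgt
    · exact not_isLegendreMS_pow_of_abs_lt_one hr hlt h
    · exact not_isLegendreMS_pow_of_one_lt_abs hgt h
  · intro habs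
    rcases (abs_eq zero_le_one).mp habs with rfl | rfl
    · intro n a hp
      simpa using hp
    · exact isLegendreMS_neg_one_pow
end
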